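/- arXiv:1012.4106 — 2 statements merged into one kernel-verified Lean document; each statement's English description precedes it below -/
import Mathlib

section
/- Let K be an algebraically closed field of characteristic ≠ 2. The image of the map P : sl(2,K) × sl(2,K) → sl(2,K), P(X,Y) = [[[X,Y],X],[[X,Y],Y]], contains no element of the form m·e with m ≠ 0, where e = E₁₂. In particular P is not surjective. -/
open Matrix

set_option maxHeartbeats 2000000 in
lemma sl2_aux {K : Type*} [Field K] (a b c d e f : K) :
    ⁅⁅⁅(!![a,b;c,-a] : Matrix (Fin 2) (Fin 2) K), !![d,e;f,-d]⁆, !![a,b;c,-a]⁆,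
        ⁅⁅(!![a,b;c,-a] : Matrix (Fin 2) (Fin 2) K), !![d,e;f,-d]⁆, !![d,e;f,-d]⁆⁆ =
      (-2 * ((⁅(!![a,b;c,-a] : Matrix (Fin 2) (Fin 2) K), !![d,e;f,-d]⁆ *
        ⁅(!![a,b;c,-a] : Matrix (Fin 2) (Fin 2) K), !![d,e;f,-d]⁆).trace)) •
        ⁅(!![a,b;c,-a] : Matrix (Fin 2) (Fin 2) K), !![d,e;f,-d]⁆ := by
  ext i j
  fin_cases i <;> fin_cases j <;>
    simp [Ring.lie_def, Matrix.mul_apply, Fin.sum_univ_two, Matrix.trace_fin_two] <;> ring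

lemma sl2_key {K : Type*} [Field K] (X Y : Matrix (Fin 2) (Fin 2) K)
    (hX : X.trace = 0) (hY : Y.trace = 0) :
    ⁅⁅⁅X, Y⁆, X⁆, ⁅⁅X, Y⁆, Y⁆⁆ =
      (-2 * ((⁅X, Y⁆ * ⁅X, Y⁆).trace)) • ⁅X, Y⁆ := by
  rw [Matrix.trace_fin_two] at hX hY
  have hXe : X = !![X 0 0, X 0 1; X 1 0, -(X 0 0)] := by
    rw [show -(X 0 0) = X 1 1 by linear_combination -hX]; exact Matrix.etaExpand_eq X |>.symm
  have hYe : Y = !![Y 0 0, Y 0 1; Y 1 0, -(Y 0 0)] := by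
    rw [show -(Y 0 0) = Y 1 1 by linear_combination -hY]; exact Matrix.etaExpand_eq Y |>.symm
  rw [hXe, hYe]
  exact sl2_aux _ _ _ _ _ _

/-- Over an algebraically closed field of characteristic ≠ 2, the image of
`P(X,Y) = [[[X,Y],X],[[X,Y],Y]]` on `sl(2,K)` contains no `m • e` with `m ≠ 0`
(`e = E₁₂`); in particular `P` is not surjective onto `sl(2,K)`. -/
theorem sl2_P_not_surjective {K : Type*} [Field K] [IsAlgClosed K] (h2 : (2 : K) ≠ 0)
    (e : Matrix (Fin 2) (Fin 2) K) (he : e = !![0, 1; 0, 0]) :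
    (∀ m : K, m ≠ 0 → ∀ X Y : Matrix (Fin 2) (Fin 2) K,
        X.trace = 0 → Y.trace = 0 → ⁅⁅⁅X, Y⁆, X⁆, ⁅⁅X, Y⁆, Y⁆⁆ ≠ m • e) ∧
    ¬ (∀ A : Matrix (Fin 2) (Fin 2) K, A.trace = 0 →
        ∃ X Y : Matrix (Fin 2) (Fin 2) K, X.trace = 0 ∧ Y.trace = 0 ∧
          ⁅⁅⁅X, Y⁆, X⁆, ⁅⁅X, Y⁆, Y⁆⁆ = A) := by
  have main : ∀ m : K, m ≠ 0 → ∀ X Y : Matrix (Fin 2) (Fin 2) K,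
      X.trace = 0 → Y.trace = 0 → ⁅⁅⁅X, Y⁆, X⁆, ⁅⁅X, Y⁆, Y⁆⁆ ≠ m • e := by
    intro m hm X Y hX hY hP
    rw [sl2_key X Y hX hY, he] at hP
    set Z := ⁅X, Y⁆ with hZ
    set t : K := (Z * Z).trace with ht
    have h00 : -2 * t * Z 0 0 = 0 := by
      have := congrFun (congrFun hP 0) 0; simpa using this
    have h10 : -2 * t * Z 1 0 = 0 := by
      have := congrFun (congrFun hP 1) 0; simpa using this
    have h11 : -2 * t * Z 1 1 = 0 := by
      have := congrFun (congrFun hP 1) 1; simpa using this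
    have h01 : -2 * t * Z 0 1 = m := by
      have := congrFun (congrFun hP 0) 1; simpa using this
    have ht2 : t = Z 0 0 * Z 0 0 + Z 0 1 * Z 1 0 + (Z 1 0 * Z 0 1 + Z 1 1 * Z 1 1) := by
      rw [ht, Matrix.trace_fin_two, Matrix.mul_apply, Matrix.mul_apply, Fin.sum_univ_two,
        Fin.sum_univ_two]
    have hmt : m * t = 0 := by
      calc m * t = (-2 * t * Z 0 1) * (Z 0 0 * Z 0 0 + Z 0 1 * Z 1 0 + (Z 1 0 * Z 0 1 + Z 1 1 * Z 1 1)) := by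
            rw [h01, ← ht2]
        _ = Z 0 1 * Z 0 0 * (-2 * t * Z 0 0) + Z 0 1 * Z 0 1 * (-2 * t * Z 1 0)
              + Z 0 1 * Z 0 1 * (-2 * t * Z 1 0) + Z 0 1 * Z 1 1 * (-2 * t * Z 1 1) := by ring
        _ = 0 := by rw [h00, h10, h11]; ring
    have htz : t = 0 := by
      rcases mul_eq_zero.mp hmt with h | h
      · exact absurd h hm
      · exact h
    rw [htz] at h01
    exact hm (by linear_combination -h01)
  refine ⟨main, fun h => ?_⟩
  obtain ⟨X, Y, hX, hY, hP⟩ := h e (by rw [he, Matrix.trace_fin_two]; simp)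
  exact main 1 one_ne_zero X Y hX hY (by rw [one_smul]; exact hP)
end

section
/- Let K be a field and g a Lie algebra over K with Cartan decomposition as above. Let P(X,Y) = Σᵢ₌₁ᵐ aᵢ Eᵢ(X,Y) be a generalized Engel polynomial, and let f(t) = Σᵢ₌₁ᵐ (−1)ⁱ aᵢ tⁱ ∈ K[t]. Then for every h ∈ H and every root β, P(e_β, h) = f(β(h))·e_β. Consequently, if f(β(h)) ≠ 0 for all β ∈ R, then the image of X ↦ P(X,h) equals U = ⨁_β K·e_β. -/
/-- Let `g = H ⊕ ⨁_{β∈R} K·e_β` with `H` abelian and `[x, e_β] = β(x)·e_β` for `x ∈ H`.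
For a generalized Engel polynomial `P(X,Y) = Σ_{i=1}^m aᵢ Eᵢ(X,Y)` and
`f(t) = Σ_{i=1}^m (−1)ⁱ aᵢ tⁱ`, we have `P(e_β, h) = f(β(h))·e_β` for every root `β`;
and if `f(β(h)) ≠ 0` for all roots `β`, the image of `X ↦ P(X,h)` equals
`U = ⨁_β K·e_β`. -/
theorem generalized_engel_values {K : Type*} [Field K]
    {g : Type*} [LieRing g] [LieAlgebra K g] {R : Type*}
    (H : LieSubalgebra K g) (habelian : ∀ a ∈ H, ∀ b ∈ H, ⁅a, b⁆ = (0 : g))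
    (e : R → g) (β : R → (g →ₗ[K] K))
    (hroot : ∀ i : R, ∀ x ∈ H, ⁅x, e i⁆ = β i x • e i)
    (hind : LinearIndependent K e)
    (hspan : H.toSubmodule ⊔ Submodule.span K (Set.range e) = ⊤)
    (h : g) (hH : h ∈ H)
    (m : ℕ) (hm : 1 ≤ m) (a : ℕ → K) :
    (∀ j : R,
      (∑ i ∈ Finset.Icc 1 m, a i • ((fun Z : g => ⁅Z, h⁆)^[i] (e j))) =
        (∑ i ∈ Finset.Icc 1 m, (-1 : K) ^ i * a i * (β j h) ^ i) • e j) ∧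
    ((∀ j : R, (∑ i ∈ Finset.Icc 1 m, (-1 : K) ^ i * a i * (β j h) ^ i) ≠ 0) →
      Set.range (fun X : g => ∑ i ∈ Finset.Icc 1 m, a i • ((fun Z : g => ⁅Z, h⁆)^[i] X)) =
        (Submodule.span K (Set.range e) : Set g)) := by
  set T : g →ₗ[K] g := -((LieAlgebra.ad K g) h) with hT
  have hTapp : ∀ x : g, T x = ⁅x, h⁆ := by
    intro x
    rw [hT, LinearMap.neg_apply, LieAlgebra.ad_apply]
    exact lie_skew x h
  have hfun : (fun Z : g => ⁅Z, h⁆) = fun Z : g => T Z := by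
    funext Z; exact (hTapp Z).symm
  have hiter : ∀ (i : ℕ) (X : g), (fun Z : g => ⁅Z, h⁆)^[i] X = (T ^ i) X := by
    intro i X
    rw [hfun, Module.End.pow_apply]
  have hTe : ∀ j : R, T (e j) = (-(β j h)) • e j := by
    intro j
    rw [hTapp, ← lie_skew, hroot j h hH, neg_smul]
  have hTpow : ∀ (j : R) (i : ℕ), (T ^ i) (e j) = ((-(β j h)) ^ i) • e j := by
    intro j i
    induction i with
    | zero => simp
    | succ n ih =>
      rw [pow_succ, Module.End.mul_apply, hTe, map_smul, ih, smul_smul, pow_succ, mul_comm]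
  have part1 : ∀ j : R,
      (∑ i ∈ Finset.Icc 1 m, a i • ((fun Z : g => ⁅Z, h⁆)^[i] (e j))) =
        (∑ i ∈ Finset.Icc 1 m, (-1 : K) ^ i * a i * (β j h) ^ i) • e j := by
    intro j
    rw [Finset.sum_smul]
    refine Finset.sum_congr rfl ?_
    intro i _
    rw [hiter, hTpow, smul_smul, neg_pow]
    congr 1
    ring
  refine ⟨part1, ?_⟩
  intro hne
  -- the Engel operator as a linear map
  set P : g →ₗ[K] g := ∑ i ∈ Finset.Icc 1 m, a i • (T ^ i) with hP
  have hPapp : ∀ X : g, P X = ∑ i ∈ Finset.Icc 1 m, a i • ((fun Z : g => ⁅Z, h⁆)^[i] X) := by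
    intro X
    rw [hP, LinearMap.sum_apply]
    refine Finset.sum_congr rfl ?_
    intro i _
    rw [LinearMap.smul_apply, hiter]
  have hfun2 : (fun X : g => ∑ i ∈ Finset.Icc 1 m, a i • ((fun Z : g => ⁅Z, h⁆)^[i] X)) = ⇑P := by
    funext X; exact (hPapp X).symm
  -- span is invariant under T
  set U : Submodule K g := Submodule.span K (Set.range e) with hU
  have hinv : ∀ z ∈ U, T z ∈ U := by
    intro z hz
    have : U ≤ U.comap T := by
      rw [hU, Submodule.span_le]
      rintro _ ⟨j, rfl⟩
      rw [SetLike.mem_coe, Submodule.mem_comap, hTe]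
      exact Submodule.smul_mem _ _ (Submodule.subset_span ⟨j, rfl⟩)
    exact this hz
  have hTX : ∀ X : g, T X ∈ U := by
    intro X
    have hXtop : X ∈ H.toSubmodule ⊔ U := by rw [hU, hspan]; trivial
    obtain ⟨y, hy, z, hz, rfl⟩ := Submodule.mem_sup.mp hXtop
    rw [map_add]
    have hy0 : T y = 0 := by rw [hTapp]; exact habelian y hy h hH
    rw [hy0, zero_add]
    exact hinv z hz
  have hpowU : ∀ (k : ℕ) (z : g), z ∈ U → (T ^ k) z ∈ U := by
    intro k
    induction k with
    | zero => intro z hz; simpa using hz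
    | succ n ih =>
      intro z hz
      rw [pow_succ, Module.End.mul_apply]
      exact ih _ (hinv z hz)
  have hrange_le : LinearMap.range P ≤ U := by
    rintro _ ⟨X, rfl⟩
    rw [hPapp]
    refine Submodule.sum_mem _ ?_
    intro i hi
    obtain ⟨k, rfl⟩ : ∃ k, i = k + 1 := by
      have : 1 ≤ i := (Finset.mem_Icc.mp hi).1
      exact ⟨i - 1, by omega⟩
    rw [hiter, pow_succ, Module.End.mul_apply]
    exact Submodule.smul_mem _ _ (hpowU _ _ (hTX X))
  have hle_range : U ≤ LinearMap.range P := by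
    rw [hU, Submodule.span_le]
    rintro _ ⟨j, rfl⟩
    set c : K := ∑ i ∈ Finset.Icc 1 m, (-1 : K) ^ i * a i * (β j h) ^ i with hc
    have hPe : P (e j) = c • e j := by rw [hPapp, part1]
    refine ⟨c⁻¹ • e j, ?_⟩
    rw [map_smul, hPe, smul_smul, inv_mul_cancel₀ (hne j), one_smul]
  rw [hfun2, ← LinearMap.coe_range]
  exact congrArg _ (le_antisymm hrange_le hle_range)
end
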